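/- Let L, K, J, I be finite types, and let (c,v), (b,u), (a,t) be probabilistic adaptation factors with c : L → K → Bool, v : L → K → ℝ, b : K → J → Bool, u : K → J → ℝ, a : J → I → Bool, t : J → I → ℝ. Suppose all entries of v, u, and t lie in {0, 1}. Then composition of probabilistic adaptation factors is associative: (c,v) ⊗ ((b,u) ⊗ (a,t)) = ((c,v) ⊗ (b,u)) ⊗ (a,t), i.e., both the Boolean first components and the real second components agree entrywise. -/

import Mathlib

/-- Boolean part of the probabilistic composition of `(b,u)` and `(a,t)`. -/
def boolComp {K J I : Type*} [Fintype J]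
    (b : K → J → Bool) (a : J → I → Bool) (k : K) (i : I) : Bool :=
  decide (∃ j, b k j = true ∧ a j i = true)

/-- Real part of the probabilistic composition of `(b,u)` and `(a,t)`:
`v k i = ∏_{j with b k j = true and a j i = true} (u k j * t j i)`. -/
noncomputable def probCompMat {K J I : Type*} [Fintype J]
    (b : K → J → Bool) (u : K → J → ℝ) (a : J → I → Bool) (t : J → I → ℝ)
    (k : K) (i : I) : ℝ :=
  ∏ j ∈ Finset.univ.filter (fun j => b k j = true ∧ a j i = true), (u k j * t j i)

/-! For matrices with entries in `{0, 1}` a product of entries is `1` exactly when every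
factor is `1`. Hence an entry `(l, i)` of either side of the associativity law is `1` exactly
when every path `l → k → j → i` allowed by the dependency matrices carries weight `1` on all
three of its edges, and otherwise `0`. -/

section ZeroOne

variable {M : Type*} [CommMonoidWithZero M]

lemma mul_eq_zero_or_eq_one {x y : M} (hx : x = 0 ∨ x = 1) (hy : y = 0 ∨ y = 1) :
    x * y = 0 ∨ x * y = 1 := by
  rcases hx with rfl | rfl <;> simp [hy]

lemma Finset.prod_eq_zero_or_eq_one {α : Type*} (s : Finset α) {f : α → M}
    (h : ∀ x ∈ s, f x = 0 ∨ f x = 1) : ∏ x ∈ s, f x = 0 ∨ ∏ x ∈ s, f x = 1 := by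
  by_cases hall : ∀ x ∈ s, f x = 1
  · exact Or.inr (Finset.prod_eq_one hall)
  · push Not at hall
    obtain ⟨x, hx, hfx⟩ := hall
    exact Or.inl (Finset.prod_eq_zero hx ((h x hx).resolve_right hfx))

variable [Nontrivial M]

lemma mul_eq_one_iff_of_eq_zero_or_eq_one {x y : M} (hx : x = 0 ∨ x = 1) :
    x * y = 1 ↔ x = 1 ∧ y = 1 := by
  rcases hx with rfl | rfl <;> simp

lemma Finset.prod_eq_one_iff_of_eq_zero_or_eq_one {α : Type*} {s : Finset α} {f : α → M}
    (h : ∀ x ∈ s, f x = 0 ∨ f x = 1) : ∏ x ∈ s, f x = 1 ↔ ∀ x ∈ s, f x = 1 := by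
  refine ⟨fun hprod x hx => (h x hx).resolve_left fun h0 => ?_, Finset.prod_eq_one⟩
  simp [Finset.prod_eq_zero hx h0] at hprod

lemma eq_of_eq_zero_or_eq_one_of_eq_one_iff {x y : M} (hx : x = 0 ∨ x = 1) (hy : y = 0 ∨ y = 1)
    (h : x = 1 ↔ y = 1) : x = y := by
  rcases hx with rfl | rfl <;> rcases hy with rfl | rfl <;> simp_all

end ZeroOne

section Composition

variable {K J I : Type*} [Fintype J]

lemma boolComp_eq_true_iff {b : K → J → Bool} {a : J → I → Bool} {k : K} {i : I} :
    boolComp b a k i = true ↔ ∃ j, b k j = true ∧ a j i = true := by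
  simp [boolComp]

lemma boolComp_assoc {L : Type*} [Fintype K] (c : L → K → Bool) (b : K → J → Bool)
    (a : J → I → Bool) : boolComp c (boolComp b a) = boolComp (boolComp c b) a := by
  ext l i
  rw [Bool.eq_iff_iff]
  simp only [boolComp_eq_true_iff]
  exact ⟨fun ⟨k, hc, j, hb, ha⟩ => ⟨j, ⟨k, hc, hb⟩, ha⟩,
    fun ⟨j, ⟨k, hc, hb⟩, ha⟩ => ⟨k, hc, j, hb, ha⟩⟩

variable {b : K → J → Bool} {u : K → J → ℝ} {a : J → I → Bool} {t : J → I → ℝ}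

lemma probCompMat_eq_zero_or_eq_one (hu : ∀ k j, u k j = 0 ∨ u k j = 1)
    (ht : ∀ j i, t j i = 0 ∨ t j i = 1) (k : K) (i : I) :
    probCompMat b u a t k i = 0 ∨ probCompMat b u a t k i = 1 :=
  Finset.prod_eq_zero_or_eq_one _ fun j _ => mul_eq_zero_or_eq_one (hu k j) (ht j i)

lemma probCompMat_eq_one_iff (hu : ∀ k j, u k j = 0 ∨ u k j = 1)
    (ht : ∀ j i, t j i = 0 ∨ t j i = 1) {k : K} {i : I} :
    probCompMat b u a t k i = 1 ↔
      ∀ j, b k j = true → a j i = true → u k j = 1 ∧ t j i = 1 := by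
  rw [probCompMat, Finset.prod_eq_one_iff_of_eq_zero_or_eq_one
    fun j _ => mul_eq_zero_or_eq_one (hu k j) (ht j i)]
  simp only [Finset.mem_filter, Finset.mem_univ, true_and, and_imp,
    mul_eq_one_iff_of_eq_zero_or_eq_one (hu k _)]

end Composition

theorem probComp_assoc_of_zero_one_entries_general {L K J I : Type*}
    [Fintype K] [Fintype J]
    (c : L → K → Bool) (v : L → K → ℝ)
    (b : K → J → Bool) (u : K → J → ℝ)
    (a : J → I → Bool) (t : J → I → ℝ)
    (hv : ∀ (l : L) (k : K), v l k = 0 ∨ v l k = 1)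
    (hu : ∀ (k : K) (j : J), u k j = 0 ∨ u k j = 1)
    (ht : ∀ (j : J) (i : I), t j i = 0 ∨ t j i = 1) :
    (∀ (l : L) (i : I),
        boolComp c (boolComp b a) l i = boolComp (boolComp c b) a l i) ∧
    (∀ (l : L) (i : I),
        probCompMat c v (boolComp b a) (probCompMat b u a t) l i
          = probCompMat (boolComp c b) (probCompMat c v b u) a t l i) := by
  have hvu : ∀ l j, probCompMat c v b u l j = 0 ∨ probCompMat c v b u l j = 1 :=
    probCompMat_eq_zero_or_eq_one hv hu
  have hut : ∀ k i, probCompMat b u a t k i = 0 ∨ probCompMat b u a t k i = 1 :=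
    probCompMat_eq_zero_or_eq_one hu ht
  refine ⟨fun l i => by rw [boolComp_assoc], fun l i => ?_⟩
  refine eq_of_eq_zero_or_eq_one_of_eq_one_iff (probCompMat_eq_zero_or_eq_one hv hut l i)
    (probCompMat_eq_zero_or_eq_one hvu ht l i) ?_
  simp only [probCompMat_eq_one_iff hv hut, probCompMat_eq_one_iff hu ht,
    probCompMat_eq_one_iff hvu ht, probCompMat_eq_one_iff hv hu, boolComp_eq_true_iff]
  grind

theorem probComp_assoc_of_zero_one_entries {L K J I : Type*}
    [Fintype L] [Fintype K] [Fintype J] [Fintype I]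
    (c : L → K → Bool) (v : L → K → ℝ)
    (b : K → J → Bool) (u : K → J → ℝ)
    (a : J → I → Bool) (t : J → I → ℝ)
    (hv : ∀ (l : L) (k : K), v l k = 0 ∨ v l k = 1)
    (hu : ∀ (k : K) (j : J), u k j = 0 ∨ u k j = 1)
    (ht : ∀ (j : J) (i : I), t j i = 0 ∨ t j i = 1) :
    (∀ (l : L) (i : I),
        boolComp c (boolComp b a) l i = boolComp (boolComp c b) a l i) ∧
    (∀ (l : L) (i : I),
        probCompMat c v (boolComp b a) (probCompMat b u a t) l i
          = probCompMat (boolComp c b) (probCompMat c v b u) a t l i) :=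
  probComp_assoc_of_zero_one_entries_general c v b u a t hv hu ht
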